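/- For every n ≥ 1 and every x ∈ I, f_1 maps the fundamental interval I_n(x) into I_m(f_1(x)), where m = n/2 if n is even and m = (n+1)/2 if n is odd; consequently f_1 is continuous on I (and the same holds for f_2 with m = ⌊n/2⌋ when ⌊n/2⌋ ≥ 1). -/

import Mathlib

open Filter Finset MeasureTheory

/-- `qden a n` is the denominator `q_n` of the continued fraction with partial
quotients `a_1 = a 0, a_2 = a 1, …` (0-indexed sequence `a`), defined by
`q_0 = 1`, `q_1 = a_1`, `q_n = a_n q_{n-1} + q_{n-2}`. -/
def qden (a : ℕ → ℕ+) : ℕ → ℕ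
  | 0 => 1
  | 1 => a 0
  | (n+2) => (a (n+1) : ℕ) * qden a (n+1) + qden a n

/-- `pnum a n` is the numerator `p_n`, defined by `p_0 = 0`, `p_1 = 1`,
`p_n = a_n p_{n-1} + p_{n-2}`. -/
def pnum (a : ℕ → ℕ+) : ℕ → ℕ
  | 0 => 0
  | 1 => 1
  | (n+2) => (a (n+1) : ℕ) * pnum a (n+1) + pnum a n

/-- The value `[a_1, a_2, …]` of the infinite continued fraction with partial quotients
`a_1 = a 0, a_2 = a 1, …`, i.e. the limit of the convergents `p_n / q_n` (which always
exists). -/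
noncomputable def cfVal (a : ℕ → ℕ+) : ℝ :=
  limUnder atTop (fun n => (pnum a n : ℝ) / (qden a n : ℝ))

/-- The set `I` of irrational numbers of `[0,1]`. -/
def Iirr : Set ℝ := {x | x ∈ Set.Icc (0:ℝ) 1 ∧ Irrational x}

/-- The fundamental interval `I_n(x)` of rank `n` for `x = [a_1, a_2, …]`: the set of those
irrationals `y = [b_1, b_2, …]` whose first `n` partial quotients agree with those of `x`. -/
def fundInt (a : ℕ → ℕ+) (n : ℕ) : Set ℝ :=
  {y | ∃ b : ℕ → ℕ+, cfVal b = y ∧ ∀ j < n, b j = a j}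

/-- The (unique) sequence of partial quotients of `x`, when `x` has a continued
fraction expansion. -/
noncomputable def coeff (x : ℝ) : ℕ → ℕ+ := by
  classical
  exact if h : ∃ a : ℕ → ℕ+, cfVal a = x then h.choose else fun _ => 1

/-- First component of Cantor's bijection: `f₁([a_1,a_2,…]) = [a_1,a_3,a_5,…]`. -/
noncomputable def cantorF1 (x : ℝ) : ℝ := cfVal (fun j => coeff x (2*j))

/-- Second component of Cantor's bijection: `f₂([a_1,a_2,…]) = [a_2,a_4,a_6,…]`. -/
noncomputable def cantorF2 (x : ℝ) : ℝ := cfVal (fun j => coeff x (2*j+1))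

/-!
The partial quotients of `x ∈ I` are read off by the Gauss map `T x = 1/x - ⌊1/x⌋`: the `k`-th
one is `⌊1/Tᵏx⌋`. On the values of continued fractions `T` acts as the shift, so a value determines
its expansion, and the inclusion of fundamental intervals is immediate. Successive convergents
differ by `1/(q_n q_{n+1})` with `q_n ≥ n`, so expansions sharing their first `n+1` partial
quotients have values within `2/(n+1)`; and `x = (p_{n+1} + t p_n)/(q_{n+1} + t q_n)` with
`t = T^{n+1} x` shows that the Gauss-map expansion of `x` converges to `x`. Since `T` is continuous
at irrationals, where `⌊1/·⌋` is locally constant, each partial quotient is locally constant on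
`I`, so `x ↦ [a_{σ(1)}, a_{σ(2)}, …]` is continuous on `I` for every reindexing `σ`; `f₁` and `f₂`
are the cases `σ(j) = 2j - 1` and `σ(j) = 2j`.
-/

open Topology

noncomputable def convergent (a : ℕ → ℕ+) (n : ℕ) : ℝ := pnum a n / qden a n

section Convergents

variable (a : ℕ → ℕ+)

lemma qden_pos : ∀ n, 0 < qden a n
  | 0 => Nat.one_pos
  | 1 => (a 0).pos
  | n + 2 => by
      have := qden_pos n
      simp only [qden]
      positivity

lemma le_qden : ∀ n, n ≤ qden a n
  | 0 => Nat.zero_le _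
  | 1 => (a 0).pos
  | n + 2 => by
      have h₁ := le_qden (n + 1)
      have h₂ := qden_pos a n
      have h₃ : qden a (n + 1) ≤ a (n + 1) * qden a (n + 1) :=
        Nat.le_mul_of_pos_left _ (a (n + 1)).pos
      simp only [qden]
      omega

lemma pnum_mul_qden_sub_pnum_mul_qden :
    ∀ n, (pnum a (n + 1) * qden a n : ℤ) - pnum a n * qden a (n + 1) = (-1) ^ n
  | 0 => by simp [qden, pnum]
  | n + 1 => by
      have ih := pnum_mul_qden_sub_pnum_mul_qden n
      simp only [qden, pnum, pow_succ]
      push_cast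
      linear_combination -ih

lemma dist_convergent_succ (n : ℕ) :
    dist (convergent a n) (convergent a (n + 1)) = ((qden a n : ℝ) * qden a (n + 1))⁻¹ := by
  have hq₀ : (0 : ℝ) < qden a n := mod_cast qden_pos a n
  have hq₁ : (0 : ℝ) < qden a (n + 1) := mod_cast qden_pos a (n + 1)
  have hdet : (pnum a (n + 1) : ℝ) * qden a n - qden a (n + 1) * pnum a n = (-1) ^ n := by
    rw [mul_comm (qden a (n + 1) : ℝ)]
    exact_mod_cast pnum_mul_qden_sub_pnum_mul_qden a n
  rw [dist_comm, Real.dist_eq, convergent, convergent, div_sub_div _ _ hq₁.ne' hq₀.ne', hdet,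
    abs_div, abs_neg_one_pow, abs_of_pos (by positivity), one_div, mul_comm]

lemma dist_convergent_le {n m : ℕ} (h : n ≤ m) :
    dist (convergent a (n + 1)) (convergent a (m + 1)) ≤ 1 / (n + 1) - 1 / (m + 1) := by
  induction m, h using Nat.le_induction with
  | base => simp
  | succ m _ ih =>
    have h₁ : (m + 1 : ℝ) ≤ qden a (m + 1) := mod_cast le_qden a (m + 1)
    have h₂ : (m + 2 : ℝ) ≤ qden a (m + 2) := mod_cast le_qden a (m + 2)
    have hstep : dist (convergent a (m + 1)) (convergent a (m + 2)) ≤ 1 / (m + 1) - 1 / (m + 2) :=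
      calc dist (convergent a (m + 1)) (convergent a (m + 2))
          = ((qden a (m + 1) : ℝ) * qden a (m + 2))⁻¹ := dist_convergent_succ a (m + 1)
        _ ≤ ((m + 1 : ℝ) * (m + 2))⁻¹ := by gcongr
        _ = 1 / (m + 1) - 1 / (m + 2) := by field_simp; ring
    calc dist (convergent a (n + 1)) (convergent a (m + 1 + 1))
        ≤ dist (convergent a (n + 1)) (convergent a (m + 1))
          + dist (convergent a (m + 1)) (convergent a (m + 2)) := dist_triangle _ _ _
      _ ≤ (1 / (n + 1) - 1 / (m + 1)) + (1 / (m + 1) - 1 / (m + 2)) := add_le_add ih hstep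
      _ = 1 / (n + 1) - 1 / ((m + 1 : ℕ) + 1) := by push_cast; ring

lemma tendsto_convergent : Tendsto (convergent a) atTop (𝓝 (cfVal a)) := by
  have hshift : CauchySeq fun n => convergent a (n + 1) :=
    cauchySeq_of_le_tendsto_0' (fun n : ℕ => 1 / ((n : ℝ) + 1))
      (fun n m h => (dist_convergent_le a h).trans (sub_le_self _ (by positivity)))
      tendsto_one_div_add_atTop_nhds_zero_nat
  obtain ⟨L, hL⟩ := cauchySeq_tendsto_of_complete ((cauchySeq_shift 1).1 hshift)
  show Tendsto _ _ (𝓝 (limUnder atTop (convergent a)))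
  rwa [hL.limUnder_eq]

lemma dist_convergent_cfVal_le (n : ℕ) : dist (convergent a (n + 1)) (cfVal a) ≤ 1 / (n + 1) :=
  le_of_tendsto (tendsto_const_nhds.dist ((tendsto_convergent a).comp (tendsto_add_atTop_nat 1)))
    (eventually_atTop.2 ⟨n, fun m hm =>
      (dist_convergent_le a hm).trans (sub_le_self _ (by positivity))⟩)

end Convergents

lemma pnum_eq_and_qden_eq {a b : ℕ → ℕ+} :
    ∀ n, (∀ j < n, a j = b j) → pnum a n = pnum b n ∧ qden a n = qden b n
  | 0, _ => ⟨rfl, rfl⟩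
  | 1, h => by simp [pnum, qden, h 0 Nat.one_pos]
  | n + 2, h => by
      obtain ⟨hp₁, hq₁⟩ := pnum_eq_and_qden_eq (n + 1) fun j hj => h j (by omega)
      obtain ⟨hp₀, hq₀⟩ := pnum_eq_and_qden_eq n fun j hj => h j (by omega)
      simp only [pnum, qden, h (n + 1) (by omega), hp₁, hq₁, hp₀, hq₀, and_self]

lemma dist_cfVal_le {a b : ℕ → ℕ+} {n : ℕ} (h : ∀ j ≤ n, a j = b j) :
    dist (cfVal a) (cfVal b) ≤ 2 / (n + 1) := by
  have hconv : convergent a (n + 1) = convergent b (n + 1) := by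
    obtain ⟨hp, hq⟩ := pnum_eq_and_qden_eq (n + 1) fun j hj => h j (Nat.lt_succ_iff.1 hj)
    rw [convergent, convergent, hp, hq]
  calc dist (cfVal a) (cfVal b)
      ≤ dist (convergent a (n + 1)) (cfVal a) + dist (convergent b (n + 1)) (cfVal b) := by
        rw [dist_comm _ (cfVal a), hconv]; exact dist_triangle _ _ _
    _ ≤ 1 / (n + 1) + 1 / (n + 1) :=
        add_le_add (dist_convergent_cfVal_le a n) (dist_convergent_cfVal_le b n)
    _ = 2 / (n + 1) := by ring

section Shift

variable (a : ℕ → ℕ+)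

lemma pnum_succ_and_qden_succ : ∀ n,
    pnum a (n + 1) = qden (fun j => a (j + 1)) n ∧
      qden a (n + 1) = a 0 * qden (fun j => a (j + 1)) n + pnum (fun j => a (j + 1)) n
  | 0 => by simp [qden, pnum]
  | 1 => by constructor <;> simp only [pnum, qden] <;> ring
  | n + 2 => by
      obtain ⟨hp₁, hq₁⟩ := pnum_succ_and_qden_succ (n + 1)
      obtain ⟨hp₀, hq₀⟩ := pnum_succ_and_qden_succ n
      simp only [pnum, qden] at hp₁ hq₁ ⊢
      rw [hp₁, hp₀, hq₁, hq₀]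
      exact ⟨rfl, by ring⟩

lemma convergent_succ (n : ℕ) :
    convergent a (n + 1) = ((a 0 : ℝ) + convergent (fun j => a (j + 1)) n)⁻¹ := by
  obtain ⟨hp, hq⟩ := pnum_succ_and_qden_succ a n
  have : (0 : ℝ) < qden (fun j => a (j + 1)) n := mod_cast qden_pos _ n
  rw [convergent, convergent, hp, hq]
  push_cast
  field_simp

lemma cfVal_nonneg : 0 ≤ cfVal a :=
  ge_of_tendsto' (tendsto_convergent a) fun n => by unfold convergent; positivity

lemma cfVal_eq_inv : cfVal a = ((a 0 : ℝ) + cfVal (fun j => a (j + 1)))⁻¹ := by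
  have hpos : (0 : ℝ) < a 0 + cfVal (fun j => a (j + 1)) := by
    have := cfVal_nonneg (fun j => a (j + 1))
    positivity
  refine tendsto_nhds_unique ((tendsto_convergent a).comp (tendsto_add_atTop_nat 1)) ?_
  simp only [Function.comp_def, convergent_succ]
  exact (tendsto_const_nhds.add (tendsto_convergent _)).inv₀ hpos.ne'

lemma cfVal_pos : 0 < cfVal a := by
  have := cfVal_nonneg (fun j => a (j + 1))
  rw [cfVal_eq_inv]
  positivity

lemma inv_cfVal : (cfVal a)⁻¹ = a 0 + cfVal (fun j => a (j + 1)) := by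
  rw [cfVal_eq_inv, inv_inv]

lemma cfVal_lt_one : cfVal a < 1 := by
  have h₁ : (1 : ℝ) ≤ a 0 := mod_cast (a 0).pos
  have h₂ := cfVal_pos (fun j => a (j + 1))
  rw [cfVal_eq_inv]
  exact inv_lt_one_of_one_lt₀ (by linarith)

end Shift

noncomputable def gauss (x : ℝ) : ℝ := x⁻¹ - ⌊x⁻¹⌋₊

-- On `I` the floor is at least `1`, so `toPNat'` does not alter it.
noncomputable def cfDigits (x : ℝ) (k : ℕ) : ℕ+ := ⌊(gauss^[k] x)⁻¹⌋₊.toPNat'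

lemma floor_inv_cfVal (a : ℕ → ℕ+) : ⌊(cfVal a)⁻¹⌋₊ = a 0 := by
  have h₀ := cfVal_nonneg (fun j => a (j + 1))
  have h₁ := cfVal_lt_one (fun j => a (j + 1))
  rw [inv_cfVal, Nat.floor_eq_iff (by positivity)]
  constructor <;> linarith

lemma gauss_cfVal (a : ℕ → ℕ+) : gauss (cfVal a) = cfVal (fun j => a (j + 1)) := by
  rw [gauss, floor_inv_cfVal, inv_cfVal, add_sub_cancel_left]

lemma gauss_iterate_cfVal (a : ℕ → ℕ+) (k : ℕ) :
    gauss^[k] (cfVal a) = cfVal (fun j => a (j + k)) := by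
  induction k with
  | zero => rfl
  | succ k ih => simp only [Function.iterate_succ_apply', ih, gauss_cfVal, add_assoc, add_comm 1 k]

lemma cfDigits_cfVal (a : ℕ → ℕ+) : cfDigits (cfVal a) = a := by
  funext k
  rw [cfDigits, gauss_iterate_cfVal, floor_inv_cfVal, zero_add, PNat.coe_toPNat']

lemma cfVal_injective : Function.Injective cfVal :=
  Function.LeftInverse.injective cfDigits_cfVal

lemma coeff_cfVal (a : ℕ → ℕ+) : coeff (cfVal a) = a := by
  have hex : ∃ b, cfVal b = cfVal a := ⟨a, rfl⟩
  rw [coeff, dif_pos hex]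
  exact cfVal_injective hex.choose_spec

lemma Iirr_subset_Ioo : Iirr ⊆ Set.Ioo 0 1 := fun _ ⟨⟨h₀, h₁⟩, hirr⟩ =>
  ⟨h₀.lt_of_ne hirr.ne_zero.symm, h₁.lt_of_ne hirr.ne_one⟩

lemma mapsTo_gauss : Set.MapsTo gauss Iirr Iirr := by
  intro x hx
  have hx₀ := (Iirr_subset_Ioo hx).1
  refine ⟨⟨sub_nonneg.2 (Nat.floor_le (by positivity)), ?_⟩, hx.2.inv.sub_natCast _⟩
  have := Nat.lt_floor_add_one x⁻¹
  rw [gauss]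
  linarith

lemma inv_gauss_iterate {x : ℝ} (hx : x ∈ Iirr) (k : ℕ) :
    (gauss^[k] x)⁻¹ = cfDigits x k + gauss^[k + 1] x := by
  obtain ⟨hy₀, hy₁⟩ := Iirr_subset_Ioo (mapsTo_gauss.iterate k hx)
  have hfloor : 0 < ⌊(gauss^[k] x)⁻¹⌋₊ := Nat.floor_pos.2 ((one_le_inv₀ hy₀).2 hy₁.le)
  rw [cfDigits, PNat.toPNat'_coe hfloor, Function.iterate_succ_apply', gauss, add_sub_cancel]

lemma eq_div_gauss_iterate {x : ℝ} (hx : x ∈ Iirr) (n : ℕ) :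
    x = (pnum (cfDigits x) (n + 1) + gauss^[n + 1] x * pnum (cfDigits x) n) /
      (qden (cfDigits x) (n + 1) + gauss^[n + 1] x * qden (cfDigits x) n) := by
  induction n with
  | zero =>
    have := inv_gauss_iterate hx 0
    simp only [pnum, qden, Function.iterate_zero_apply] at this ⊢
    push_cast
    rw [mul_zero, add_zero, mul_one, ← this, one_div, inv_inv]
  | succ n ih =>
    set a := cfDigits x
    set t := gauss^[n + 2] x
    have hAt : gauss^[n + 1] x = ((a (n + 1) : ℝ) + t)⁻¹ := by
      rw [← inv_gauss_iterate hx, inv_inv]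
    have hpos : (0 : ℝ) < a (n + 1) + t := by
      have := (mapsTo_gauss.iterate (n + 2) hx).1.1
      positivity
    refine ih.trans ?_
    rw [hAt, ← mul_div_mul_left _ _ hpos.ne']
    simp only [pnum, qden]
    push_cast
    congr 1 <;> field_simp <;> ring

lemma abs_add_mul_div_add_mul_sub_div_le {P p Q q t : ℝ} (hQ : 0 < Q) (hq : 0 < q) (ht : 0 ≤ t) :
    |(P + t * p) / (Q + t * q) - P / Q| ≤ |p / q - P / Q| := by
  have hden : 0 < Q + t * q := by positivity
  have hratio : |t * q / (Q + t * q)| ≤ 1 := by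
    rw [abs_of_nonneg (by positivity), div_le_one hden]
    linarith
  have hid : (P + t * p) / (Q + t * q) - P / Q = t * q / (Q + t * q) * (p / q - P / Q) := by
    field_simp
    ring
  rw [hid, abs_mul]
  exact mul_le_of_le_one_left (abs_nonneg _) hratio

lemma dist_convergent_cfDigits_le {x : ℝ} (hx : x ∈ Iirr) (n : ℕ) :
    dist (convergent (cfDigits x) (n + 1)) x ≤ 1 / (n + 1) := by
  set a := cfDigits x
  have hq₀ : (1 : ℝ) ≤ qden a n := mod_cast qden_pos a n
  have hq₁ : (n + 1 : ℝ) ≤ qden a (n + 1) := mod_cast le_qden a (n + 1)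
  calc dist (convergent a (n + 1)) x
      = |(pnum a (n + 1) + gauss^[n + 1] x * pnum a n) /
            (qden a (n + 1) + gauss^[n + 1] x * qden a n) - convergent a (n + 1)| := by
        rw [dist_comm, Real.dist_eq, ← eq_div_gauss_iterate hx n]
    _ ≤ |convergent a n - convergent a (n + 1)| :=
        abs_add_mul_div_add_mul_sub_div_le ((by positivity : (0 : ℝ) < n + 1).trans_le hq₁)
          (zero_lt_one.trans_le hq₀) (mapsTo_gauss.iterate (n + 1) hx).1.1
    _ = ((qden a n : ℝ) * qden a (n + 1))⁻¹ := dist_convergent_succ a n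
    _ ≤ (1 * (n + 1 : ℝ))⁻¹ := by gcongr
    _ = 1 / (n + 1) := by rw [one_mul, one_div]

lemma cfVal_cfDigits {x : ℝ} (hx : x ∈ Iirr) : cfVal (cfDigits x) = x :=
  tendsto_nhds_unique ((tendsto_convergent _).comp (tendsto_add_atTop_nat 1)) <|
    tendsto_iff_dist_tendsto_zero.2 <| squeeze_zero (fun _ => dist_nonneg)
      (dist_convergent_cfDigits_le hx) tendsto_one_div_add_atTop_nhds_zero_nat

lemma coeff_eq_cfDigits {x : ℝ} (hx : x ∈ Iirr) : coeff x = cfDigits x := by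
  conv_lhs => rw [← cfVal_cfDigits hx]
  exact coeff_cfVal _

lemma eventually_floor_inv_eq {t : ℝ} (ht : t ∈ Iirr) : ∀ᶠ y in 𝓝 t, ⌊y⁻¹⌋₊ = ⌊t⁻¹⌋₊ := by
  have ht₀ := (Iirr_subset_Ioo ht).1
  have hmem : t⁻¹ ∈ Set.Ioo (⌊t⁻¹⌋₊ : ℝ) (⌊t⁻¹⌋₊ + 1) :=
    ⟨(Nat.floor_le (by positivity)).lt_of_ne (ht.2.inv.ne_nat _).symm, Nat.lt_floor_add_one _⟩
  filter_upwards [(continuousAt_inv₀ ht₀.ne').preimage_mem_nhds (isOpen_Ioo.mem_nhds hmem)]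
    with y hy
  exact (Nat.floor_eq_iff ((Nat.cast_nonneg _).trans hy.1.le)).2 ⟨hy.1.le, hy.2⟩

lemma continuousAt_gauss {t : ℝ} (ht : t ∈ Iirr) : ContinuousAt gauss t := by
  have : ContinuousAt (fun y : ℝ => y⁻¹ - ⌊t⁻¹⌋₊) t :=
    (continuousAt_inv₀ (Iirr_subset_Ioo ht).1.ne').sub continuousAt_const
  refine this.congr ?_
  filter_upwards [eventually_floor_inv_eq ht] with y hy
  rw [gauss, hy]

lemma continuousWithinAt_gauss_iterate {x : ℝ} (hx : x ∈ Iirr) (k : ℕ) :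
    ContinuousWithinAt gauss^[k] Iirr x := by
  induction k with
  | zero => exact continuousWithinAt_id
  | succ k ih =>
    rw [Function.iterate_succ']
    exact (continuousAt_gauss (mapsTo_gauss.iterate k hx)).comp_continuousWithinAt ih

lemma eventually_cfDigits_eq {x : ℝ} (hx : x ∈ Iirr) (k : ℕ) :
    ∀ᶠ y in 𝓝[Iirr] x, cfDigits y k = cfDigits x k :=
  ((continuousWithinAt_gauss_iterate hx k).eventually
    (eventually_floor_inv_eq (mapsTo_gauss.iterate k hx))).mono fun y hy => by
      rw [cfDigits, cfDigits, hy]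

lemma continuousOn_cfVal_coeff_comp (σ : ℕ → ℕ) :
    ContinuousOn (fun x => cfVal (coeff x ∘ σ)) Iirr := by
  intro x hx
  refine Metric.tendsto_nhds.2 fun ε hε => ?_
  obtain ⟨n, hn⟩ := exists_nat_one_div_lt (half_pos hε)
  have hagree : ∀ᶠ y in 𝓝[Iirr] x, ∀ j ∈ Set.Iic n, cfDigits y (σ j) = cfDigits x (σ j) :=
    (Set.finite_Iic n).eventually_all.2 fun j _ => eventually_cfDigits_eq hx (σ j)
  filter_upwards [hagree, self_mem_nhdsWithin] with y hy hyI
  calc dist (cfVal (coeff y ∘ σ)) (cfVal (coeff x ∘ σ)) ≤ 2 / (n + 1) := by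
        rw [coeff_eq_cfDigits hx, coeff_eq_cfDigits hyI]
        exact dist_cfVal_le hy
    _ = 2 * (1 / (n + 1)) := by ring
    _ < ε := by linarith

lemma mapsTo_cfVal_coeff_comp_fundInt (σ : ℕ → ℕ) (a : ℕ → ℕ+) {m n : ℕ}
    (h : ∀ j < m, σ j < n) :
    Set.MapsTo (fun x => cfVal (coeff x ∘ σ)) (fundInt a n) (fundInt (a ∘ σ) m) := by
  rintro _ ⟨b, rfl, hb⟩
  exact ⟨b ∘ σ, by simp only [coeff_cfVal], fun j hj => hb _ (h j hj)⟩

theorem cantorF_mapsTo_fundInt_and_continuousOn_general (n : ℕ)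
    (a : ℕ → ℕ+) :
    Set.MapsTo cantorF1 (fundInt a n)
      (fundInt (fun j => a (2*j)) (if Even n then n / 2 else (n+1) / 2)) ∧
    (1 ≤ n / 2 →
      Set.MapsTo cantorF2 (fundInt a n) (fundInt (fun j => a (2*j+1)) (n / 2))) ∧
    ContinuousOn cantorF1 Iirr ∧ ContinuousOn cantorF2 Iirr := by
  refine ⟨mapsTo_cfVal_coeff_comp_fundInt (2 * ·) a fun j hj => ?_,
    fun _ => mapsTo_cfVal_coeff_comp_fundInt (2 * · + 1) a fun j hj => by omega,
    continuousOn_cfVal_coeff_comp (2 * ·), continuousOn_cfVal_coeff_comp (2 * · + 1)⟩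
  split_ifs at hj <;> omega

/-- For every `n ≥ 1` and `x ∈ I` with partial quotients `a`: `f₁` maps `I_n(x)` into
`I_m(f₁(x))` where `m = n/2` if `n` is even and `m = (n+1)/2` if `n` is odd (note that
`I_m(f₁(x)) = fundInt (fun j => a (2*j)) m`); consequently `f₁` is continuous on `I`.
The same holds for `f₂` with `m = ⌊n/2⌋` when `⌊n/2⌋ ≥ 1`. -/
theorem cantorF_mapsTo_fundInt_and_continuousOn (n : ℕ) (hn : 1 ≤ n)
    (a : ℕ → ℕ+) (x : ℝ) (hx : x ∈ Iirr) (hxa : cfVal a = x) :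
    Set.MapsTo cantorF1 (fundInt a n)
      (fundInt (fun j => a (2*j)) (if Even n then n / 2 else (n+1) / 2)) ∧
    (1 ≤ n / 2 →
      Set.MapsTo cantorF2 (fundInt a n) (fundInt (fun j => a (2*j+1)) (n / 2))) ∧
    ContinuousOn cantorF1 Iirr ∧ ContinuousOn cantorF2 Iirr :=
  cantorF_mapsTo_fundInt_and_continuousOn_general n a
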